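/- arXiv:2012.15528 — 2 statements merged into one kernel-verified Lean document; each statement's English description precedes it below -/
import Mathlib

section
/- Let (Ψ_p)_{p∈P} be a family of IFS of affine contractions satisfying assumption (T_aff). Let p₀ ∈ P and ε > 0 with Δ(p₀) > 1 + ε. Let μ be the Bernoulli-type probability measure on 𝒜^{ℤ₋*} determined by μ[α] = Λ_{p₀,α}^{Δ(p₀)} for every cylinder [α], α ∈ 𝒜^*, and for each p ∈ P let ν_p be the pushforward of μ by π_p. Then there exists δ > 0 such that the interval B := (p₀−δ, p₀+δ) is contained in P and the integral I := ∫_{p∈B} ∫_{x∈ℝ} D(ν_p,x) dν_p(x) dLeb₁(p) is finite, where D(ν_p,x) := liminf_{r→0⁺} ν_p((x−r, x+r))/(2r). -/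
open Filter MeasureTheory Set
open scoped Topology ENNReal NNReal

noncomputable section

namespace Paper

abbrev E (n : ℕ) : Type := EuclideanSpace ℝ (Fin n)

def cube (N : ℕ) : Set (E N) := {x | ∀ i, x i ∈ Icc (-1:ℝ) 1}

def cubeO (d : ℕ) : Set (E d) := {p | ∀ i, p i ∈ Ioo (-1:ℝ) 1}

variable {A : Type}

def consF (a : A) (𝔞 : ℕ → A) : ℕ → A := fun n =>
  match n with
  | 0 => a
  | Nat.succ k => 𝔞 k

def app : List A → (ℕ → A) → ℕ → A
  | [], 𝔞 => 𝔞
  | a :: w, 𝔞 => app w (consF a 𝔞)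

def trunc (α : ℕ → A) (n : ℕ) : List A := List.ofFn fun i : Fin n => α i

def cyl (w : List A) : Set (ℕ → A) := {α | ∀ i : Fin w.length, α i = w.get i}

variable {N d : ℕ}

def psi (f : E d → (ℕ → A) → E N → E N) (p : E d) : List A → (ℕ → A) → E N → E N
  | [], _ => id
  | a :: w, 𝔞 => f p (consF a 𝔞) ∘ psi f p w (consF a 𝔞)

def dentry (g : E N → E N) (x : E N) (i j : Fin N) : ℝ :=
  fderiv ℝ g x (EuclideanSpace.single j (1:ℝ)) i

def lam (hN : 0 < N) (f : E d → (ℕ → A) → E N → E N) (p : E d) (𝔞 : ℕ → A)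
    (w : List A) (x : E N) : ℝ :=
  |dentry (psi f p w 𝔞) x ⟨0, hN⟩ ⟨0, hN⟩|

def Lam (hN : 0 < N) (f : E d → (ℕ → A) → E N → E N) (p : E d) (𝔞 : ℕ → A)
    (w : List A) : ℝ :=
  sSup ((fun x => lam hN f p 𝔞 w x) '' cube N)

def piProj (f : E d → (ℕ → A) → E N → E N) (p : E d) (𝔞 α : ℕ → A) : E N :=
  limUnder atTop fun n => psi f p (trunc α n) 𝔞 0

def Mop (g : E N → E N) : ℝ := sSup ((fun x => ‖fderiv ℝ g x‖) '' cube N)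

def pressure [Fintype A] (f : E d → (ℕ → A) → E N → E N) (p : E d) (𝔞 : ℕ → A) (s : ℝ) : ℝ :=
  limUnder atTop fun n : ℕ =>
    (1 / n : ℝ) * Real.log (∑ w : Fin n → A, Mop (psi f p (List.ofFn w) 𝔞) ^ s)

structure SkewFamily (A : Type) (N d : ℕ) (r : ℕ∞) where
  f : E d → (ℕ → A) → E N → E N
  X' : Set (E N)
  P' : Set (E d)
  X'_open : IsOpen X'
  X_subset : cube N ⊆ X'
  P'_open : IsOpen P'
  P_subset : closure (cubeO d) ⊆ P'
  smooth : ∀ 𝔞 : ℕ → A, ContDiffOn ℝ r (fun q : E d × E N => f q.1 𝔞 q.2) (P' ×ˢ X')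
  inj : ∀ 𝔞 : ℕ → A, ∀ p ∈ P', Set.InjOn (f p 𝔞) X'
  into : ∀ 𝔞 : ℕ → A, ∀ p ∈ P', f p 𝔞 '' X' ⊆ cube N
  holder0 : ∃ C > (0:ℝ), ∃ θ ∈ Set.Ioo (0:ℝ) 1, ∀ p ∈ P', ∀ (𝔞 𝔟 : ℕ → A) (q : ℕ),
      (∀ i < q, 𝔞 i = 𝔟 i) → ∀ x ∈ X', ‖f p 𝔞 x - f p 𝔟 x‖ ≤ C * θ ^ q
  holder1 : ∃ C > (0:ℝ), ∃ θ ∈ Set.Ioo (0:ℝ) 1, ∀ p ∈ P', ∀ (𝔞 𝔟 : ℕ → A) (q : ℕ),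
      (∀ i < q, 𝔞 i = 𝔟 i) → ∀ x ∈ X',
      ‖fderiv ℝ (f p 𝔞) x - fderiv ℝ (f p 𝔟) x‖ ≤ C * θ ^ q
  cont2 : ∀ p ∈ P', ∀ 𝔞 : ℕ → A, ∀ ε > (0:ℝ), ∃ q : ℕ, ∀ 𝔟 : ℕ → A,
      (∀ i < q, 𝔞 i = 𝔟 i) → ∀ x ∈ X',
      ‖iteratedFDeriv ℝ 2 (f p 𝔞) x - iteratedFDeriv ℝ 2 (f p 𝔟) x‖ ≤ ε

def UnipOn (hN : 0 < N) (f : E d → (ℕ → A) → E N → E N)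
    (P' : Set (E d)) (X' : Set (E N)) : Prop :=
  ∀ p ∈ P', ∀ 𝔞 : ℕ → A, ∀ x ∈ X',
    (∀ i j : Fin N, (i : ℕ) < (j : ℕ) → dentry (f p 𝔞) x i j = 0) ∧
    (∀ i j : Fin N, dentry (f p 𝔞) x i i = dentry (f p 𝔞) x j j) ∧
    0 < |dentry (f p 𝔞) x ⟨0, hN⟩ ⟨0, hN⟩| ∧ |dentry (f p 𝔞) x ⟨0, hN⟩ ⟨0, hN⟩| < 1

def GammaBounds (hN : 0 < N) (f : E d → (ℕ → A) → E N → E N) (γ' γ : ℝ) : Prop :=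
  0 < γ' ∧ γ' < γ ∧ γ < 1 ∧
  ∀ p ∈ closure (cubeO d), ∀ (𝔞 : ℕ → A) (a : A), ∀ x ∈ cube N,
    γ' < lam hN f p 𝔞 [a] x ∧ lam hN f p 𝔞 [a] x < γ

structure ParamPerturb {A : Type} {N d : ℕ} {r : ℕ∞} (hN : 0 < N)
    (S : SkewFamily A N d r) (θ : ℝ) (τ : ℕ) where
  g : E τ → E d → (ℕ → A) → E N → E N
  jointSmooth : ∀ 𝔞 : ℕ → A, ContDiffOn ℝ r
      (fun q : E τ × E d × E N => g q.1 q.2.1 𝔞 q.2.2) ((cubeO τ) ×ˢ S.P' ×ˢ S.X')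
  smooth : ∀ t ∈ cubeO τ, ∀ 𝔞 : ℕ → A, ContDiffOn ℝ r
      (fun q : E d × E N => g t q.1 𝔞 q.2) (S.P' ×ˢ S.X')
  inj : ∀ t ∈ cubeO τ, ∀ 𝔞 : ℕ → A, ∀ p ∈ S.P', Set.InjOn (g t p 𝔞) S.X'
  into : ∀ t ∈ cubeO τ, ∀ 𝔞 : ℕ → A, ∀ p ∈ S.P', g t p 𝔞 '' S.X' ⊆ cube N
  close : ∃ θ' < θ, ∀ t ∈ cubeO τ, ∀ (𝔞 : ℕ → A) (k : ℕ), (k : ℕ∞) ≤ r →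
      ∀ p ∈ S.P', ∀ x ∈ S.X',
      ‖iteratedFDeriv ℝ k (fun q : E d × E N => S.f q.1 𝔞 q.2 - g t q.1 𝔞 q.2) (p, x)‖ ≤ θ'
  unip : ∀ t ∈ cubeO τ, UnipOn hN (g t) S.P' S.X'

def TransAssumption {A : Type} {N d : ℕ} {r : ℕ∞} (hN : 0 < N)
    (S : SkewFamily A N d r) : Prop :=
  ∃ C > (0:ℝ),
    (∀ 𝔞 α β : ℕ → A, α 0 ≠ β 0 → ∀ rr > (0:ℝ),
      volume {p ∈ cubeO d | ‖piProj S.f p 𝔞 α - piProj S.f p 𝔞 β‖ < rr}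
        ≤ ENNReal.ofReal (C * rr ^ N)) ∧
    ∃ θ₀ > (0:ℝ), ∀ θ : ℝ, 0 < θ → θ ≤ θ₀ → ∀ τ : ℕ, 0 < τ →
      ∀ Ft : ParamPerturb hN S θ τ, ∀ t ∈ cubeO τ,
      ∀ 𝔞 α β : ℕ → A, α 0 ≠ β 0 → ∀ rr > (0:ℝ),
        volume {p ∈ cubeO d | ‖piProj (Ft.g t) p 𝔞 α - piProj (Ft.g t) p 𝔞 β‖ < rr}
          ≤ ENNReal.ofReal (C * rr ^ N)

def dens {N : ℕ} (ν : Measure (E N)) (x : E N) : ℝ≥0∞ :=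
  liminf (fun rr : ℝ => ν (Metric.ball x rr) / volume (Metric.ball (0 : E N) rr)) (𝓝[>] (0:ℝ))

end Paper

namespace IFS

open Paper

variable {A : Type}

def psiA (c b : ℝ → A → ℝ) (p : ℝ) : List A → ℝ → ℝ
  | [], x => x
  | a :: w, x => c p a * psiA c b p w x + b p a

def piA (c b : ℝ → A → ℝ) (p : ℝ) (α : ℕ → A) : ℝ :=
  limUnder atTop fun n => psiA c b p (Paper.trunc α n) 0

def LamA (c : ℝ → A → ℝ) (p : ℝ) (w : List A) : ℝ := (w.map fun a => |c p a|).prod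

def IFSHyp (c b : ℝ → A → ℝ) (U : Set ℝ) : Prop :=
  IsOpen U ∧ Icc (-1:ℝ) 1 ⊆ U ∧
  (∀ a : A, ContinuousOn (fun p => c p a) U) ∧
  (∀ a : A, ContinuousOn (fun p => b p a) U) ∧
  (∀ p ∈ U, ∀ a : A, ∀ x ∈ Icc (-1:ℝ) 1, c p a * x + b p a ∈ Ioo (-1:ℝ) 1)

def GammaBoundsA (c : ℝ → A → ℝ) (γ' γ : ℝ) : Prop :=
  0 < γ' ∧ γ' < γ ∧ γ < 1 ∧ ∀ p ∈ Icc (-1:ℝ) 1, ∀ a : A, γ' < |c p a| ∧ |c p a| < γ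

def TransAff (c b : ℝ → A → ℝ) : Prop :=
  ∃ C > (0:ℝ), ∀ α β : ℕ → A, α 0 ≠ β 0 → ∀ rr > (0:ℝ),
    volume {p ∈ Ioo (-1:ℝ) 1 | |piA c b p α - piA c b p β| < rr} ≤ ENNReal.ofReal (C * rr)

def densR (ν : MeasureTheory.Measure ℝ) (x : ℝ) : ℝ≥0∞ :=
  liminf (fun rr : ℝ => ν (Ioo (x - rr) (x + rr)) / ENNReal.ofReal (2 * rr)) (𝓝[>] (0:ℝ))

end IFS

namespace IFS

open Paper

variable {A : Type}

/-! ### Auxiliary lemmas -/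

/-- the k-th term of the series defining `piA`. -/
def ser (c b : ℝ → A → ℝ) (p : ℝ) (α : ℕ → A) (k : ℕ) : ℝ :=
  (∏ i ∈ Finset.range k, c p (α i)) * b p (α k)

lemma psiA_trunc (c b : ℝ → A → ℝ) (p : ℝ) (α : ℕ → A) (n : ℕ) :
    psiA c b p (Paper.trunc α n) 0 = ∑ k ∈ Finset.range n, ser c b p α k := by
  induction n generalizing α with
  | zero => simp [Paper.trunc, psiA]
  | succ n ih =>
    have htr : Paper.trunc α (n+1) = α 0 :: Paper.trunc (fun i => α (i+1)) n := by
      simp [Paper.trunc, List.ofFn_succ]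
    rw [htr]
    show c p (α 0) * psiA c b p (Paper.trunc (fun i => α (i+1)) n) 0 + b p (α 0) = _
    rw [ih, Finset.sum_range_succ', Finset.mul_sum]
    simp only [ser]
    congr 1
    · apply Finset.sum_congr rfl
      intro k _
      rw [Finset.prod_range_succ']
      ring
    · simp

lemma summable_ser {γ Mb : ℝ} (c b : ℝ → A → ℝ) (p : ℝ) (α : ℕ → A)
    (hγ0 : 0 ≤ γ) (hγ1 : γ < 1)
    (hc : ∀ a, |c p a| ≤ γ) (hb : ∀ a, |b p a| ≤ Mb) :
    Summable (ser c b p α) := by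
  apply Summable.of_norm_bounded (g := fun k => Mb * γ ^ k)
  · exact (summable_geometric_of_lt_one hγ0 hγ1).mul_left Mb
  · intro k
    have h1 : ‖ser c b p α k‖ = (∏ i ∈ Finset.range k, |c p (α i)|) * |b p (α k)| := by
      simp [ser, abs_mul, Finset.abs_prod]
    rw [h1]
    have h2 : (∏ i ∈ Finset.range k, |c p (α i)|) ≤ γ ^ k := by
      calc (∏ i ∈ Finset.range k, |c p (α i)|) ≤ ∏ _i ∈ Finset.range k, γ :=
        Finset.prod_le_prod (fun i _ => abs_nonneg _) (fun i _ => hc _)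
      _ = γ ^ k := by simp
    have h3 : |b p (α k)| ≤ Mb := hb _
    calc (∏ i ∈ Finset.range k, |c p (α i)|) * |b p (α k)|
        ≤ γ ^ k * Mb := by
          apply mul_le_mul h2 h3 (abs_nonneg _)
          positivity
      _ = Mb * γ ^ k := mul_comm _ _

lemma piA_eq_tsum {γ Mb : ℝ} (c b : ℝ → A → ℝ) (p : ℝ) (α : ℕ → A)
    (hγ0 : 0 ≤ γ) (hγ1 : γ < 1)
    (hc : ∀ a, |c p a| ≤ γ) (hb : ∀ a, |b p a| ≤ Mb) :
    piA c b p α = ∑' k, ser c b p α k := by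
  apply Filter.Tendsto.limUnder_eq
  have h := (summable_ser c b p α hγ0 hγ1 hc hb).hasSum.tendsto_sum_nat
  convert h using 2 with n
  exact psiA_trunc c b p α n

lemma piA_factor {γ Mb : ℝ} (c b : ℝ → A → ℝ) (p : ℝ) (α β : ℕ → A) (k : ℕ)
    (hγ0 : 0 ≤ γ) (hγ1 : γ < 1)
    (hc : ∀ a, |c p a| ≤ γ) (hb : ∀ a, |b p a| ≤ Mb)
    (hpre : ∀ i < k, α i = β i) :
    piA c b p α - piA c b p β
      = (∏ i ∈ Finset.range k, c p (α i)) *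
        (piA c b p (fun i => α (k+i)) - piA c b p (fun i => β (k+i))) := by
  have hsplit : ∀ δ : ℕ → A,
      piA c b p δ = (∑ j ∈ Finset.range k, ser c b p δ j)
        + (∏ i ∈ Finset.range k, c p (δ i)) * piA c b p (fun i => δ (k+i)) := by
    intro δ
    rw [piA_eq_tsum c b p δ hγ0 hγ1 hc hb,
        piA_eq_tsum c b p (fun i => δ (k+i)) hγ0 hγ1 hc hb]
    rw [← Summable.sum_add_tsum_nat_add k (summable_ser c b p δ hγ0 hγ1 hc hb)]
    congr 1
    rw [← tsum_mul_left]
    congr 1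
    funext j
    show ser c b p δ (j + k) = _
    simp only [ser]
    rw [add_comm j k, Finset.prod_range_add]
    exact mul_assoc _ _ _
  rw [hsplit α, hsplit β]
  have h1 : (∑ j ∈ Finset.range k, ser c b p α j) = ∑ j ∈ Finset.range k, ser c b p β j := by
    apply Finset.sum_congr rfl
    intro j hj
    simp only [ser]
    rw [Finset.mem_range] at hj
    have : ∀ i ∈ Finset.range j, α i = β i := fun i hi =>
      hpre i (lt_trans (Finset.mem_range.mp hi) hj)
    rw [hpre j hj, Finset.prod_congr rfl fun i hi => by rw [this i hi]]
  have h2 : (∏ i ∈ Finset.range k, c p (α i)) = ∏ i ∈ Finset.range k, c p (β i) :=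
    Finset.prod_congr rfl fun i hi => by rw [hpre i (Finset.mem_range.mp hi)]
  rw [h1, h2]
  ring

lemma nullMeas_of_add_compl_le {Ω : Type*} [MeasurableSpace Ω] (μ : Measure Ω)
    [IsFiniteMeasure μ] (s : Set Ω) (h : μ s + μ sᶜ ≤ μ Set.univ) :
    NullMeasurableSet s μ := by
  set t := toMeasurable μ s with ht
  set u := toMeasurable μ sᶜ with hu
  have hts : s ⊆ t := subset_toMeasurable _ _
  have hus : sᶜ ⊆ u := subset_toMeasurable _ _
  have hum : MeasurableSet u := measurableSet_toMeasurable _ _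
  have hcover : Set.univ ⊆ t ∪ u := by
    intro x _
    by_cases hx : x ∈ s
    · exact Or.inl (hts hx)
    · exact Or.inr (hus hx)
  have hkey : μ (t ∩ u) = 0 := by
    have h1 : μ (t ∪ u) + μ (t ∩ u) = μ t + μ u := measure_union_add_inter t hum
    have h2 : μ t + μ u = μ s + μ sᶜ := by rw [measure_toMeasurable, measure_toMeasurable]
    have h3 : μ Set.univ ≤ μ (t ∪ u) := measure_mono hcover
    have h4 : μ (t ∪ u) + μ (t ∩ u) ≤ μ (t ∪ u) := by
      calc μ (t ∪ u) + μ (t ∩ u) = μ s + μ sᶜ := by rw [h1, h2]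
        _ ≤ μ Set.univ := h
        _ ≤ μ (t ∪ u) := h3
    have h5 : μ (t ∪ u) ≠ ⊤ := measure_ne_top _ _
    by_contra h0
    exact absurd h4 (not_le.mpr (ENNReal.lt_add_right h5 h0))
  have hdecomp : s = uᶜ ∪ (s ∩ u) := by
    ext x
    constructor
    · intro hx
      by_cases hxu : x ∈ u
      · exact Or.inr ⟨hx, hxu⟩
      · exact Or.inl hxu
    · rintro (hx | ⟨hx, _⟩)
      · by_contra hns
        exact hx (hus hns)
      · exact hx
  rw [hdecomp]
  apply NullMeasurableSet.union
  · exact hum.compl.nullMeasurableSet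
  · exact NullMeasurableSet.of_null
      (measure_mono_null (inter_subset_inter_left u hts) hkey)

lemma sum_words {A : Type} [Fintype A] (g : A → ℝ) (n : ℕ) :
    ∑ w : Fin n → A, ∏ i, g (w i) = (∑ a, g a) ^ n := by
  classical
  have := Finset.prod_univ_sum (fun _ : Fin n => (Finset.univ : Finset A))
      (fun _ a => g a)
  rw [Fintype.piFinset_univ] at this
  rw [← this]
  simp

lemma mem_cyl_ofFn {n : ℕ} (w : Fin n → A) (α : ℕ → A) :
    α ∈ cyl (List.ofFn w) ↔ ∀ i : Fin n, α i = w i := by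
  constructor
  · intro h i
    have := h (Fin.cast (List.length_ofFn (f := w)).symm i)
    rwa [List.get_ofFn, Fin.cast_cast, Fin.cast_eq_self] at this
  · intro h i
    rw [List.get_ofFn]
    have := h (Fin.cast (List.length_ofFn (f := w)) i)
    simpa using this

section CylMeasure

variable [Fintype A] [MeasurableSpace A]
variable (μ : Measure (ℕ → A)) [IsProbabilityMeasure μ]
variable (m : A → ℝ)

omit [IsProbabilityMeasure μ] in
lemma sum_measure_cyl (hm0 : ∀ a, 0 ≤ m a) (hm1 : ∑ a, m a = 1)
    (hcyl : ∀ (n : ℕ) (w : Fin n → A), μ (cyl (List.ofFn w)) = ENNReal.ofReal (∏ i, m (w i)))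
    (n : ℕ) :
    ∑ w : Fin n → A, μ (cyl (List.ofFn w)) = 1 := by
  classical
  have : ∑ w : Fin n → A, μ (cyl (List.ofFn w))
      = ∑ w : Fin n → A, ENNReal.ofReal (∏ i, m (w i)) :=
    Finset.sum_congr rfl fun w _ => hcyl n w
  rw [this, ← ENNReal.ofReal_sum_of_nonneg (fun w _ => Finset.prod_nonneg fun i _ => hm0 _)]
  rw [sum_words m n, hm1, one_pow, ENNReal.ofReal_one]

lemma nullMeasurable_cyl_ofFn (hm0 : ∀ a, 0 ≤ m a) (hm1 : ∑ a, m a = 1)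
    (hcyl : ∀ (n : ℕ) (w : Fin n → A), μ (cyl (List.ofFn w)) = ENNReal.ofReal (∏ i, m (w i)))
    {n : ℕ} (w : Fin n → A) :
    NullMeasurableSet (cyl (List.ofFn w)) μ := by
  classical
  apply nullMeas_of_add_compl_le μ
  have hcover : (cyl (List.ofFn w))ᶜ ⊆ ⋃ w' ∈ Finset.univ.erase w, cyl (List.ofFn w') := by
    intro α hα
    have hmem : α ∈ cyl (List.ofFn (fun i : Fin n => α i)) :=
      (mem_cyl_ofFn _ α).mpr fun i => rfl
    have hne : (fun i : Fin n => α i) ≠ w := by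
      intro hEq
      exact hα ((mem_cyl_ofFn w α).mpr fun i => by rw [← hEq])
    exact Set.mem_biUnion (Finset.mem_erase.mpr ⟨hne, Finset.mem_univ _⟩) hmem
  have h1 : μ (cyl (List.ofFn w))ᶜ ≤ ∑ w' ∈ Finset.univ.erase w, μ (cyl (List.ofFn w')) :=
    le_trans (measure_mono hcover) (measure_biUnion_finset_le _ _)
  have h2 : μ (cyl (List.ofFn w)) + μ (cyl (List.ofFn w))ᶜ
      ≤ ∑ w' : Fin n → A, μ (cyl (List.ofFn w')) := by
    rw [← Finset.add_sum_erase Finset.univ _ (Finset.mem_univ w)]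
    exact add_le_add_right h1 _
  rw [sum_measure_cyl μ m hm0 hm1 hcyl n] at h2
  simpa using h2

lemma nullMeasurable_coord (hm0 : ∀ a, 0 ≤ m a) (hm1 : ∑ a, m a = 1)
    (hcyl : ∀ (n : ℕ) (w : Fin n → A), μ (cyl (List.ofFn w)) = ENNReal.ofReal (∏ i, m (w i)))
    (i : ℕ) (a : A) :
    NullMeasurableSet {α : ℕ → A | α i = a} μ := by
  classical
  have hrepr : {α : ℕ → A | α i = a}
      = ⋃ w : {w : Fin (i+1) → A // w ⟨i, Nat.lt_succ_self i⟩ = a},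
          cyl (List.ofFn w.val) := by
    ext α
    simp only [Set.mem_setOf_eq, Set.mem_iUnion]
    constructor
    · intro hα
      refine ⟨⟨fun t => α t, by simpa using hα⟩, ?_⟩
      exact (mem_cyl_ofFn _ α).mpr fun t => rfl
    · rintro ⟨⟨w, hw⟩, hmem⟩
      have := (mem_cyl_ofFn w α).mp hmem ⟨i, Nat.lt_succ_self i⟩
      simpa [hw] using this
  rw [hrepr]
  exact NullMeasurableSet.iUnion fun w =>
    nullMeasurable_cyl_ofFn μ m hm0 hm1 hcyl w.val

end CylMeasure

lemma measurable_indicator_of_isOpen {f : ℝ → ℝ} {s : Set ℝ} (hs : IsOpen s)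
    (hf : ContinuousOn f s) : Measurable (s.indicator f) := by
  apply measurable_of_isOpen
  intro V hV
  rw [Set.indicator_preimage]
  unfold Set.ite
  apply MeasurableSet.union
  · rw [Set.inter_comm]
    exact (hf.isOpen_inter_preimage hs hV).measurableSet
  · apply MeasurableSet.diff _ hs.measurableSet
    have : ((0 : ℝ → ℝ) ⁻¹' V) = Set.univ ∨ ((0 : ℝ → ℝ) ⁻¹' V) = ∅ := by
      by_cases h0 : (0:ℝ) ∈ V
      · left; ext x; simpa using h0
      · right; ext x; simpa using h0
    rcases this with h | h <;> rw [h]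
    · exact MeasurableSet.univ
    · exact MeasurableSet.empty

lemma measurable_measure_Ioo (ν : Measure ℝ) [IsFiniteMeasure ν] {r : ℝ} (hr : 0 < r) :
    Measurable fun x => ν (Ioo (x - r) (x + r)) := by
  have heq : ∀ x : ℝ, ν (Ioo (x - r) (x + r)) = ν (Iio (x + r)) - ν (Iic (x - r)) := by
    intro x
    rw [show Ioo (x - r) (x + r) = Iio (x + r) \ Iic (x - r) by
      ext y; simp only [mem_Ioo, mem_diff, mem_Iio, mem_Iic, not_le]; exact and_comm]
    exact measure_diff
      (fun y hy => by simp only [Set.mem_Iic] at hy; simp only [Set.mem_Iio]; linarith)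
      measurableSet_Iic.nullMeasurableSet (measure_ne_top ν _)
  simp only [heq]
  apply Measurable.sub
  · exact Monotone.measurable (fun x y hxy => measure_mono (Iio_subset_Iio (by linarith)))
  · exact Monotone.measurable (fun x y hxy => measure_mono (Iic_subset_Iic.mpr (by linarith)))

lemma densR_le_liminf (ν : Measure ℝ) (x : ℝ) :
    densR ν x ≤ liminf (fun n : ℕ =>
      ν (Ioo (x - 1/(n+1)) (x + 1/(n+1))) / ENNReal.ofReal (2 * (1/(n+1)))) atTop := by
  have hu : Tendsto (fun n : ℕ => (1:ℝ)/(n+1)) atTop (𝓝[>] 0) := by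
    rw [tendsto_nhdsWithin_iff]
    constructor
    · exact tendsto_one_div_add_atTop_nhds_zero_nat
    · refine Filter.Eventually.of_forall fun n => ?_
      simp only [Set.mem_Ioi]
      positivity
  have h := Filter.liminf_le_liminf_of_le (f := 𝓝[>] (0:ℝ))
    (g := Filter.map (fun n : ℕ => (1:ℝ)/(n+1)) atTop) hu
    (u := fun rr : ℝ => ν (Ioo (x - rr) (x + rr)) / ENNReal.ofReal (2 * rr))
  rw [← Filter.liminf_comp] at h
  exact h

end IFS

namespace IFS

open Paper

set_option maxHeartbeats 1000000 in
/-- Proposition: finiteness of the integral of the lower density over a small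
interval of parameters. -/
theorem proposition_integr {A : Type} [Fintype A] [MeasurableSpace A]
    (hA : 2 ≤ Fintype.card A)
    (c b : ℝ → A → ℝ) (U : Set ℝ) (h : IFSHyp c b U)
    (γ' γ : ℝ) (hγ : GammaBoundsA c γ' γ)
    (hT : TransAff c b)
    (p₀ : ℝ) (hp₀ : p₀ ∈ Ioo (-1:ℝ) 1) (ε : ℝ) (hε : 0 < ε)
    (Δp₀ : ℝ) (hΔ1 : ∑ a : A, |c p₀ a| ^ Δp₀ = 1) (hΔ2 : 1 + ε < Δp₀)
    (μ : MeasureTheory.Measure (ℕ → A)) [MeasureTheory.IsProbabilityMeasure μ]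
    (hμ : ∀ w : List A, μ (Paper.cyl w) = ENNReal.ofReal (LamA c p₀ w ^ Δp₀)) :
    ∃ δ > (0:ℝ), Ioo (p₀ - δ) (p₀ + δ) ⊆ Ioo (-1:ℝ) 1 ∧
      (∫⁻ p in Ioo (p₀ - δ) (p₀ + δ),
        ∫⁻ x, densR (MeasureTheory.Measure.map (piA c b p) μ) x
          ∂(MeasureTheory.Measure.map (piA c b p) μ)) < ⊤ := by
  classical
  obtain ⟨hUopen, hIccU, hccont, hbcont, _hinto⟩ := h
  obtain ⟨hγ'0, hγ'γ, hγlt1, hcγ⟩ := hγ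
  obtain ⟨C, hC0, hTC⟩ := hT
  have hγpos : (0:ℝ) < γ := lt_trans hγ'0 hγ'γ
  have hp₀Icc : p₀ ∈ Icc (-1:ℝ) 1 := Ioo_subset_Icc_self hp₀
  -- a uniform bound for b on Icc
  obtain ⟨Mb, hMb⟩ : ∃ Mb : ℝ, ∀ p ∈ Icc (-1:ℝ) 1, ∀ a : A, |b p a| ≤ Mb := by
    have hexb : ∀ a : A, ∃ Ma : ℝ, ∀ p ∈ Icc (-1:ℝ) 1, |b p a| ≤ Ma := by
      intro a
      obtain ⟨Ma, hMa⟩ := isCompact_Icc.exists_bound_of_continuousOn ((hbcont a).mono hIccU)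
      exact ⟨Ma, fun p hp => by simpa [Real.norm_eq_abs] using hMa p hp⟩
    choose Ma hMa using hexb
    obtain ⟨a₀⟩ : Nonempty A := Fintype.card_pos_iff.mp (by omega)
    refine ⟨Finset.univ.sup' ⟨a₀, Finset.mem_univ a₀⟩ Ma, fun p hp a => ?_⟩
    exact le_trans (hMa a p hp) (Finset.le_sup' Ma (Finset.mem_univ a))
  have hΔgt1 : (1:ℝ) < Δp₀ := by linarith
  have hΔpos : (0:ℝ) < Δp₀ := by linarith
  have hΔε : ε ≤ Δp₀ - 1 := by linarith
  set q0 : ℝ := γ ^ ε with hq0def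
  have hq0pos : 0 < q0 := Real.rpow_pos_of_pos hγpos ε
  have hq0lt1 : q0 < 1 := Real.rpow_lt_one hγpos.le hγlt1 hε
  set ρ : ℝ := (1 + q0) / 2 with hρdef
  have hρpos : 0 < ρ := by rw [hρdef]; linarith
  have hq0ρ : q0 < ρ := by rw [hρdef]; linarith
  have hρlt1 : ρ < 1 := by rw [hρdef]; linarith
  -- choice of δ
  obtain ⟨δ, hδpos, hBIoo, hBρ⟩ :
      ∃ δ > (0:ℝ), Ioo (p₀ - δ) (p₀ + δ) ⊆ Ioo (-1:ℝ) 1 ∧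
        ∀ p ∈ Ioo (p₀ - δ) (p₀ + δ), ∀ a : A, ρ * |c p₀ a| ≤ |c p a| := by
    have hη : (0:ℝ) < (1 - ρ) * γ' := mul_pos (by linarith) hγ'0
    have hmemnhd : ∀ a : A, {p : ℝ | |c p a - c p₀ a| < (1-ρ)*γ'} ∈ 𝓝 p₀ := by
      intro a
      have hca : ContinuousAt (fun p => c p a) p₀ :=
        (hccont a).continuousAt (hUopen.mem_nhds (hIccU hp₀Icc))
      have hball := hca (Metric.ball_mem_nhds (c p₀ a) hη)
      refine Filter.mem_of_superset hball ?_
      intro p hp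
      simpa [Real.dist_eq] using hp
    have hall : ((⋂ a : A, {p : ℝ | |c p a - c p₀ a| < (1-ρ)*γ'}) ∩ Ioo (-1:ℝ) 1) ∈ 𝓝 p₀ :=
      Filter.inter_mem (Filter.iInter_mem.mpr hmemnhd) (isOpen_Ioo.mem_nhds hp₀)
    obtain ⟨δ, hδpos, hballsub⟩ := Metric.mem_nhds_iff.mp hall
    refine ⟨δ, hδpos, ?_, ?_⟩
    · intro p hp
      have hmem : p ∈ Metric.ball p₀ δ := by rwa [Real.ball_eq_Ioo]
      exact (hballsub hmem).2
    · intro p hp a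
      have hmem : p ∈ Metric.ball p₀ δ := by rwa [Real.ball_eq_Ioo]
      have h1 : |c p a - c p₀ a| < (1-ρ)*γ' := Set.mem_iInter.mp (hballsub hmem).1 a
      have h2 : γ' ≤ |c p₀ a| := (hcγ p₀ hp₀Icc a).1.le
      have h3 : |c p₀ a| - |c p a| ≤ |c p a - c p₀ a| := by
        rw [abs_sub_comm]
        exact abs_sub_abs_le_abs_sub _ _
      have h4 : (1-ρ)*γ' ≤ (1-ρ)*|c p₀ a| :=
        mul_le_mul_of_nonneg_left h2 (by linarith)
      nlinarith
  refine ⟨δ, hδpos, hBIoo, ?_⟩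
  set B : Set ℝ := Ioo (p₀ - δ) (p₀ + δ) with hBdef
  have hBIcc : B ⊆ Icc (-1:ℝ) 1 := subset_trans hBIoo Ioo_subset_Icc_self
  -- measure side setup
  set Λ : A → ℝ := fun a => |c p₀ a| with hΛdef
  have hΛpos : ∀ a, 0 < Λ a := fun a => lt_trans hγ'0 (hcγ p₀ hp₀Icc a).1
  have hΛγ : ∀ a, Λ a < γ := fun a => (hcγ p₀ hp₀Icc a).2
  set mfn : A → ℝ := fun a => Λ a ^ Δp₀ with hmdef
  have hm0 : ∀ a, 0 ≤ mfn a := fun a => Real.rpow_nonneg (abs_nonneg _) Δp₀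
  have hm1 : ∑ a, mfn a = 1 := hΔ1
  have hcylm : ∀ (n : ℕ) (w : Fin n → A),
      μ (Paper.cyl (List.ofFn w)) = ENNReal.ofReal (∏ i, mfn (w i)) := by
    intro n w
    rw [hμ]
    congr 1
    have hL : LamA c p₀ (List.ofFn w) = ∏ i, Λ (w i) := by
      rw [LamA, List.map_ofFn, List.prod_ofFn]
      rfl
    rw [hL, ← Real.finset_prod_rpow Finset.univ _ (fun i _ => abs_nonneg _) Δp₀]
  have hnullcyl : ∀ (n : ℕ) (w : Fin n → A), NullMeasurableSet (Paper.cyl (List.ofFn w)) μ :=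
    fun n w => nullMeasurable_cyl_ofFn μ mfn hm0 hm1 hcylm w
  -- singletons are null
  have hsing : ∀ α : ℕ → A, μ {α} = 0 := by
    intro α
    have hbd : ∀ n : ℕ, μ {α} ≤ ENNReal.ofReal ((γ ^ Δp₀) ^ n) := by
      intro n
      have hsub : {α} ⊆ Paper.cyl (List.ofFn (fun i : Fin n => α i)) := by
        intro x hx
        rw [Set.mem_singleton_iff] at hx
        subst hx
        exact (mem_cyl_ofFn _ _).mpr fun i => rfl
      refine le_trans (measure_mono hsub) ?_
      rw [hcylm n (fun i : Fin n => α i)]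
      apply ENNReal.ofReal_le_ofReal
      calc (∏ i : Fin n, mfn (α i)) ≤ ∏ _i : Fin n, γ ^ Δp₀ := by
            apply Finset.prod_le_prod (fun i _ => hm0 _)
            intro i _
            exact Real.rpow_le_rpow (abs_nonneg _) (hΛγ _).le hΔpos.le
        _ = (γ ^ Δp₀) ^ n := by simp
    have hlim : Tendsto (fun n : ℕ => ENNReal.ofReal ((γ ^ Δp₀) ^ n)) atTop (𝓝 0) := by
      rw [show (0:ℝ≥0∞) = ENNReal.ofReal 0 by simp]
      apply ENNReal.tendsto_ofReal
      exact tendsto_pow_atTop_nhds_zero_of_lt_one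
        (Real.rpow_nonneg hγpos.le _) (Real.rpow_lt_one hγpos.le hγlt1 hΔpos)
    exact le_zero_iff.mp (ge_of_tendsto' hlim hbd)
  -- coordinate sets and good set G
  set Cset : ℕ → A → Set (ℕ → A) := fun i a => {α | α i = a} with hCdef
  have hCnull : ∀ i a, NullMeasurableSet (Cset i a) μ :=
    fun i a => nullMeasurable_coord μ mfn hm0 hm1 hcylm i a
  set Mset : ℕ → A → Set (ℕ → A) := fun i a => toMeasurable μ (Cset i a) with hMdef
  have hMmeas : ∀ i a, MeasurableSet (Mset i a) := fun i a => measurableSet_toMeasurable μ _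
  have hMae : ∀ i a, (Mset i a : Set (ℕ → A)) =ᵐ[μ] Cset i a :=
    fun i a => NullMeasurableSet.toMeasurable_ae_eq (hCnull i a)
  set G : Set (ℕ → A) := {α | ∀ (i : ℕ) (a : A), α ∈ Mset i a ↔ α i = a} with hGdef
  have hGae : ∀ᵐ α ∂μ, α ∈ G := by
    have h2 : ∀ᵐ α ∂μ, ∀ (i : ℕ) (a : A), (α ∈ Mset i a ↔ α ∈ Cset i a) := by
      rw [MeasureTheory.ae_all_iff]
      intro i
      rw [MeasureTheory.ae_all_iff]
      intro a
      exact Filter.eventuallyEq_set.mp (hMae i a)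
    exact h2.mono fun α hα i a => hα i a
  -- disjointified measurable coordinate sets
  set eA := Fintype.equivFin A with heAdef
  set Mdis : ℕ → A → Set (ℕ → A) := fun i a =>
    Mset i a \ ⋃ (a' : A) (_ : eA a' < eA a), Mset i a' with hMdisdef
  have hMdismeas : ∀ i a, MeasurableSet (Mdis i a) :=
    fun i a => (hMmeas i a).diff
      (MeasurableSet.iUnion fun a' => MeasurableSet.iUnion fun _ => hMmeas i a')
  have hMdis_disj : ∀ i a a', a ≠ a' → ∀ α, α ∈ Mdis i a → α ∈ Mdis i a' → False := by
    intro i a a' hne α ha ha'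
    rcases lt_or_gt_of_ne (fun hEq => hne (eA.injective hEq) : eA a ≠ eA a') with hlt | hgt
    · exact ha'.2 (Set.mem_iUnion₂.mpr ⟨a, hlt, ha.1⟩)
    · exact ha.2 (Set.mem_iUnion₂.mpr ⟨a', hgt, ha'.1⟩)
  have hMdisG : ∀ α ∈ G, ∀ i a, (α ∈ Mdis i a ↔ α i = a) := by
    intro α hα i a
    constructor
    · intro hm
      exact (hα i a).mp hm.1
    · intro hia
      refine ⟨(hα i a).mpr hia, ?_⟩
      intro hmem
      obtain ⟨a', ha'⟩ := Set.mem_iUnion.mp hmem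
      obtain ⟨hlt, hM⟩ := Set.mem_iUnion.mp ha'
      have hia' : α i = a' := (hα i a').mp hM
      have : a' = a := by rw [← hia', hia]
      subst this
      exact lt_irrefl _ hlt
  -- measurable versions of the coefficient functions
  set cB : A → ℝ → ℝ := fun a => B.indicator (fun p => c p a) with hcBdef
  have hcBmeas : ∀ a, Measurable (cB a) := fun a =>
    measurable_indicator_of_isOpen isOpen_Ioo
      ((hccont a).mono (subset_trans hBIcc hIccU))
  have hcBval : ∀ a, ∀ p ∈ B, cB a p = c p a := fun a p hp => Set.indicator_of_mem hp _
  set bB : A → ℝ → ℝ := fun a => B.indicator (fun p => b p a) with hbBdef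
  have hbBmeas : ∀ a, Measurable (bB a) := fun a =>
    measurable_indicator_of_isOpen isOpen_Ioo
      ((hbcont a).mono (subset_trans hBIcc hIccU))
  have hbBval : ∀ a, ∀ p ∈ B, bB a p = b p a := fun a p hp => Set.indicator_of_mem hp _
  set Mb' : ℝ := max Mb 0 with hMb'def
  -- joint coefficient functions
  set ccF : ℕ → ℝ × (ℕ → A) → ℝ := fun i q =>
    ∑ a : A, (Mdis i a).indicator (fun _ => (1:ℝ)) q.2 * cB a q.1 with hccFdef
  set bbF : ℕ → ℝ × (ℕ → A) → ℝ := fun i q =>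
    ∑ a : A, (Mdis i a).indicator (fun _ => (1:ℝ)) q.2 * bB a q.1 with hbbFdef
  have hccFmeas : ∀ i, Measurable (ccF i) := by
    intro i
    apply Finset.measurable_sum
    intro a _
    exact ((measurable_const.indicator (hMdismeas i a)).comp measurable_snd).mul
      ((hcBmeas a).comp measurable_fst)
  have hbbFmeas : ∀ i, Measurable (bbF i) := by
    intro i
    apply Finset.measurable_sum
    intro a _
    exact ((measurable_const.indicator (hMdismeas i a)).comp measurable_snd).mul
      ((hbBmeas a).comp measurable_fst)
  have hsum_val : ∀ (f : A → ℝ → ℝ) (i : ℕ) (p : ℝ) (α : ℕ → A), α ∈ G →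
      (∑ a : A, (Mdis i a).indicator (fun _ => (1:ℝ)) α * f a p) = f (α i) p := by
    intro f i p α hα
    rw [Finset.sum_eq_single (α i)]
    · have hmem : α ∈ Mdis i (α i) := (hMdisG α hα i (α i)).mpr rfl
      simp [Set.indicator_of_mem hmem]
    · intro a _ hne
      have hnm : α ∉ Mdis i a := fun hm => hne ((hMdisG α hα i a).mp hm).symm
      simp [Set.indicator_of_notMem hnm]
    · intro hne
      exact absurd (Finset.mem_univ _) hne
  have hccF_val : ∀ p ∈ B, ∀ α ∈ G, ∀ i, ccF i (p, α) = c p (α i) := by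
    intro p hp α hα i
    show (∑ a : A, (Mdis i a).indicator (fun _ => (1:ℝ)) α * cB a p) = _
    rw [hsum_val cB i p α hα, hcBval _ p hp]
  have hbbF_val : ∀ p ∈ B, ∀ α ∈ G, ∀ i, bbF i (p, α) = b p (α i) := by
    intro p hp α hα i
    show (∑ a : A, (Mdis i a).indicator (fun _ => (1:ℝ)) α * bB a p) = _
    rw [hsum_val bB i p α hα, hbBval _ p hp]
  have hsum_bd : ∀ (f : A → ℝ → ℝ) (K : ℝ), 0 ≤ K → (∀ a p, |f a p| ≤ K) →
      ∀ (i : ℕ) (q : ℝ × (ℕ → A)),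
      |∑ a : A, (Mdis i a).indicator (fun _ => (1:ℝ)) q.2 * f a q.1| ≤ K := by
    intro f K hK0 hK i q
    by_cases hex : ∃ a : A, q.2 ∈ Mdis i a
    · obtain ⟨a0, ha0⟩ := hex
      have heq : (∑ a : A, (Mdis i a).indicator (fun _ => (1:ℝ)) q.2 * f a q.1) = f a0 q.1 := by
        rw [Finset.sum_eq_single a0]
        · simp [Set.indicator_of_mem ha0]
        · intro a _ hne
          have hnm : q.2 ∉ Mdis i a := fun hm => hMdis_disj i a a0 hne q.2 hm ha0
          simp [Set.indicator_of_notMem hnm]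
        · intro hne
          exact absurd (Finset.mem_univ _) hne
      rw [heq]
      exact hK a0 q.1
    · have heq : (∑ a : A, (Mdis i a).indicator (fun _ => (1:ℝ)) q.2 * f a q.1) = 0 := by
        apply Finset.sum_eq_zero
        intro a _
        have hnm : q.2 ∉ Mdis i a := fun hm => hex ⟨a, hm⟩
        simp [Set.indicator_of_notMem hnm]
      rw [heq]
      simpa using hK0
  have hcB_bd : ∀ a p, |cB a p| ≤ γ := by
    intro a p
    by_cases hp : p ∈ B
    · rw [hcBval a p hp]
      exact (hcγ p (hBIcc hp) a).2.le
    · rw [show cB a p = 0 from Set.indicator_of_notMem hp _]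
      simpa using hγpos.le
  have hbB_bd : ∀ a p, |bB a p| ≤ Mb' := by
    intro a p
    by_cases hp : p ∈ B
    · rw [hbBval a p hp]
      exact le_trans (hMb p (hBIcc hp) a) (le_max_left _ _)
    · rw [show bB a p = 0 from Set.indicator_of_notMem hp _]
      have : (0:ℝ) ≤ Mb' := le_max_right Mb 0
      simpa using this
  have hccF_bd : ∀ i q, |ccF i q| ≤ γ := fun i q => hsum_bd cB γ hγpos.le hcB_bd i q
  have hbbF_bd : ∀ i q, |bbF i q| ≤ Mb' := fun i q =>
    hsum_bd bB Mb' (le_max_right _ _) hbB_bd i q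
  -- the jointly measurable coding map
  set Ψterm : ℕ → ℝ × (ℕ → A) → ℝ := fun k q =>
    (∏ i ∈ Finset.range k, ccF i q) * bbF k q with hΨtermdef
  have hΨtermmeas : ∀ k, Measurable (Ψterm k) := fun k =>
    (Finset.measurable_prod _ fun i _ => hccFmeas i).mul (hbbFmeas k)
  have hΨtermbd : ∀ k q, ‖Ψterm k q‖ ≤ Mb' * γ ^ k := by
    intro k q
    rw [Real.norm_eq_abs, hΨtermdef]
    simp only [abs_mul]
    rw [Finset.abs_prod]
    have h2 : (∏ i ∈ Finset.range k, |ccF i q|) ≤ γ ^ k := by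
      calc (∏ i ∈ Finset.range k, |ccF i q|) ≤ ∏ _i ∈ Finset.range k, γ :=
        Finset.prod_le_prod (fun i _ => abs_nonneg _) (fun i _ => hccF_bd i q)
      _ = γ ^ k := by simp
    calc (∏ i ∈ Finset.range k, |ccF i q|) * |bbF k q| ≤ γ ^ k * Mb' := by
          apply mul_le_mul h2 (hbbF_bd k q) (abs_nonneg _)
          positivity
      _ = Mb' * γ ^ k := mul_comm _ _
  have hΨsum : ∀ q, Summable fun k => Ψterm k q := fun q =>
    Summable.of_norm_bounded
      ((summable_geometric_of_lt_one hγpos.le hγlt1).mul_left Mb') (fun k => hΨtermbd k q)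
  set ΨS : ℝ × (ℕ → A) → ℝ := fun q => ∑' k, Ψterm k q with hΨSdef
  have hΨSmeas : Measurable ΨS := by
    apply measurable_of_tendsto_metrizable'
      (f := fun n q => ∑ k ∈ Finset.range n, Ψterm k q) atTop
    · intro n
      exact Finset.measurable_sum _ fun k _ => hΨtermmeas k
    · rw [tendsto_pi_nhds]
      intro q
      exact (hΨsum q).hasSum.tendsto_sum_nat
  -- ΨS agrees with piA on B × G
  have hcp_bd : ∀ p ∈ B, ∀ a : A, |c p a| ≤ γ := fun p hp a => (hcγ p (hBIcc hp) a).2.le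
  have hbp_bd : ∀ p ∈ B, ∀ a : A, |b p a| ≤ Mb := fun p hp => hMb p (hBIcc hp)
  have hΨeq : ∀ p ∈ B, ∀ α ∈ G, ΨS (p, α) = piA c b p α := by
    intro p hp α hα
    rw [piA_eq_tsum c b p α hγpos.le hγlt1 (hcp_bd p hp) (hbp_bd p hp)]
    show (∑' k, Ψterm k (p, α)) = ∑' k, ser c b p α k
    apply tsum_congr
    intro k
    show (∏ i ∈ Finset.range k, ccF i (p, α)) * bbF k (p, α) = ser c b p α k
    rw [ser, hbbF_val p hp α hα k]
    congr 1
    exact Finset.prod_congr rfl fun i _ => hccF_val p hp α hα i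
  -- the sequence of radii
  set u : ℕ → ℝ := fun n => 1/(n+1) with hudef
  have hupos : ∀ n : ℕ, (0:ℝ) < u n := by
    intro n
    rw [hudef]
    positivity
  -- the double-integral quantity
  set Jp : ℝ → ℝ → ℝ≥0∞ := fun p r => ∫⁻ α, μ {β | |ΨS (p, α) - ΨS (p, β)| < r} ∂μ
    with hJpdef
  -- Step A : pointwise bound for the density integral
  have hstepA : ∀ p ∈ B,
      (∫⁻ x, densR (Measure.map (piA c b p) μ) x ∂(Measure.map (piA c b p) μ))
        ≤ liminf (fun n : ℕ => Jp p (u n) / ENNReal.ofReal (2 * u n)) atTop := by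
    intro p hp
    have hΨpmeas : Measurable fun α => ΨS (p, α) := hΨSmeas.comp measurable_prodMk_left
    have hmapν : Measure.map (piA c b p) μ = Measure.map (fun α => ΨS (p, α)) μ :=
      Measure.map_congr (hGae.mono fun α hα => (hΨeq p hp α hα).symm)
    rw [hmapν]
    set ν : Measure ℝ := Measure.map (fun α => ΨS (p, α)) μ with hνdef
    haveI : IsProbabilityMeasure ν := Measure.isProbabilityMeasure_map hΨpmeas.aemeasurable
    have hmIoo : ∀ n : ℕ, Measurable fun x => ν (Ioo (x - u n) (x + u n)) :=
      fun n => measurable_measure_Ioo ν (hupos n)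
    have hIooβ : ∀ (y r : ℝ), ν (Ioo (y - r) (y + r)) = μ {β | |y - ΨS (p, β)| < r} := by
      intro y r
      rw [hνdef, Measure.map_apply hΨpmeas measurableSet_Ioo]
      congr 1
      ext β
      simp only [Set.mem_preimage, Set.mem_Ioo, Set.mem_setOf_eq]
      rw [abs_lt]
      constructor
      · rintro ⟨h1, h2⟩
        constructor <;> linarith
      · rintro ⟨h1, h2⟩
        constructor <;> linarith
    calc (∫⁻ x, densR ν x ∂ν)
        ≤ ∫⁻ x, liminf (fun n : ℕ =>
            ν (Ioo (x - u n) (x + u n)) / ENNReal.ofReal (2 * u n)) atTop ∂ν :=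
          lintegral_mono fun x => densR_le_liminf ν x
      _ ≤ liminf (fun n : ℕ =>
            ∫⁻ x, ν (Ioo (x - u n) (x + u n)) / ENNReal.ofReal (2 * u n) ∂ν) atTop :=
          lintegral_liminf_le fun n => (hmIoo n).div_const _
      _ = liminf (fun n : ℕ => Jp p (u n) / ENNReal.ofReal (2 * u n)) atTop := by
          apply Filter.liminf_congr
          apply Filter.Eventually.of_forall
          intro n
          simp only [div_eq_mul_inv]
          rw [lintegral_mul_const _ (hmIoo n)]
          congr 1
          show (∫⁻ x, ν (Ioo (x - u n) (x + u n)) ∂ν)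
              = ∫⁻ α, μ {β | |ΨS (p, α) - ΨS (p, β)| < u n} ∂μ
          conv_lhs => rw [hνdef]
          rw [lintegral_map (hmIoo n) hΨpmeas]
          apply lintegral_congr
          intro α
          exact hIooβ (ΨS (p, α)) (u n)
  -- measurability of Jp in p
  have hSmeas : ∀ r : ℝ,
      MeasurableSet {z : (ℝ × (ℕ → A)) × (ℕ → A) | |ΨS z.1 - ΨS (z.1.1, z.2)| < r} := by
    intro r
    have hg : Measurable fun z : (ℝ × (ℕ → A)) × (ℕ → A) => |ΨS z.1 - ΨS (z.1.1, z.2)| :=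
      ((hΨSmeas.comp measurable_fst).sub
        (hΨSmeas.comp ((measurable_fst.fst).prodMk measurable_snd))).abs
    exact measurableSet_lt hg measurable_const
  have hJmeas : ∀ r : ℝ, Measurable fun p => Jp p r := by
    intro r
    have h1 : Measurable fun q : ℝ × (ℕ → A) =>
        μ (Prod.mk q ⁻¹' {z : (ℝ × (ℕ → A)) × (ℕ → A) | |ΨS z.1 - ΨS (z.1.1, z.2)| < r}) :=
      measurable_measure_prodMk_left (hSmeas r)
    exact h1.lintegral_prod_right'
  -- Tonelli
  have hTon : ∀ r : ℝ, 0 < r → (∫⁻ p in B, Jp p r) =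
      ∫⁻ α, ∫⁻ β, (volume.restrict B) {p | |ΨS (p, α) - ΨS (p, β)| < r} ∂μ ∂μ := by
    intro r _hr
    have hg : Measurable fun q : ℝ × (ℕ → A) =>
        μ (Prod.mk q ⁻¹' {z : (ℝ × (ℕ → A)) × (ℕ → A) | |ΨS z.1 - ΨS (z.1.1, z.2)| < r}) :=
      measurable_measure_prodMk_left (hSmeas r)
    have hswap1 : (∫⁻ p in B, Jp p r)
        = ∫⁻ α, ∫⁻ p in B, μ {β | |ΨS (p, α) - ΨS (p, β)| < r} ∂volume ∂μ :=
      lintegral_lintegral_swap hg.aemeasurable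
    rw [hswap1]
    apply lintegral_congr
    intro α
    have hTmeas : MeasurableSet {z : ℝ × (ℕ → A) | |ΨS (z.1, α) - ΨS z| < r} := by
      have hm : Measurable fun z : ℝ × (ℕ → A) => |ΨS (z.1, α) - ΨS z| :=
        ((hΨSmeas.comp (measurable_fst.prodMk measurable_const)).sub hΨSmeas).abs
      exact measurableSet_lt hm measurable_const
    have h1 : ∀ p : ℝ, μ {β | |ΨS (p, α) - ΨS (p, β)| < r}
        = ∫⁻ β, Set.indicator {z : ℝ × (ℕ → A) | |ΨS (z.1, α) - ΨS z| < r}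
            (fun _ => (1:ℝ≥0∞)) (p, β) ∂μ := by
      intro p
      have hsec : MeasurableSet {β : ℕ → A | |ΨS (p, α) - ΨS (p, β)| < r} := by
        have hm : Measurable fun β : ℕ → A => |ΨS (p, α) - ΨS (p, β)| :=
          (measurable_const.sub (hΨSmeas.comp measurable_prodMk_left)).abs
        exact measurableSet_lt hm measurable_const
      rw [← lintegral_indicator_one hsec]
      apply lintegral_congr
      intro β
      have e1 : β ∈ {β : ℕ → A | |ΨS (p, α) - ΨS (p, β)| < r}
          ↔ ((p, β) ∈ {z : ℝ × (ℕ → A) | |ΨS (z.1, α) - ΨS z| < r}) := Iff.rfl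
      by_cases hβ : β ∈ {β : ℕ → A | |ΨS (p, α) - ΨS (p, β)| < r}
      · rw [Set.indicator_of_mem hβ, Set.indicator_of_mem (e1.mp hβ)]
        rfl
      · rw [Set.indicator_of_notMem hβ, Set.indicator_of_notMem (fun hm => hβ (e1.mpr hm))]
    calc (∫⁻ p in B, μ {β | |ΨS (p, α) - ΨS (p, β)| < r} ∂volume)
        = ∫⁻ p in B, ∫⁻ β, Set.indicator {z : ℝ × (ℕ → A) | |ΨS (z.1, α) - ΨS z| < r}
            (fun _ => (1:ℝ≥0∞)) (p, β) ∂μ ∂volume := by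
          apply lintegral_congr
          intro p
          exact h1 p
      _ = ∫⁻ β, ∫⁻ p in B, Set.indicator {z : ℝ × (ℕ → A) | |ΨS (z.1, α) - ΨS z| < r}
            (fun _ => (1:ℝ≥0∞)) (p, β) ∂volume ∂μ :=
          lintegral_lintegral_swap (measurable_const.indicator hTmeas).aemeasurable
      _ = ∫⁻ β, (volume.restrict B) {p | |ΨS (p, α) - ΨS (p, β)| < r} ∂μ := by
          apply lintegral_congr
          intro β
          have hsecp : MeasurableSet {p : ℝ | |ΨS (p, α) - ΨS (p, β)| < r} := by
            have hm : Measurable fun p : ℝ => |ΨS (p, α) - ΨS (p, β)| :=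
              ((hΨSmeas.comp (measurable_id.prodMk measurable_const)).sub
                (hΨSmeas.comp (measurable_id.prodMk measurable_const))).abs
            exact measurableSet_lt hm measurable_const
          rw [← lintegral_indicator_one hsecp]
          apply lintegral_congr
          intro p
          have e2 : p ∈ {p : ℝ | |ΨS (p, α) - ΨS (p, β)| < r}
              ↔ ((p, β) ∈ {z : ℝ × (ℕ → A) | |ΨS (z.1, α) - ΨS z| < r}) := Iff.rfl
          by_cases hc : p ∈ {p : ℝ | |ΨS (p, α) - ΨS (p, β)| < r}
          · rw [Set.indicator_of_mem (e2.mp hc), Set.indicator_of_mem hc]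
            rfl
          · rw [Set.indicator_of_notMem (fun hm => hc (e2.mpr hm)), Set.indicator_of_notMem hc]
  -- per-pair transversality bound
  have hpair : ∀ r : ℝ, 0 < r → ∀ α ∈ G, ∀ β ∈ G,
      (volume.restrict B) {p | |ΨS (p, α) - ΨS (p, β)| < r}
        ≤ (∑' k : ℕ, (toMeasurable μ (Paper.cyl (Paper.trunc α k))).indicator
              (fun _ => ENNReal.ofReal (C * r / (ρ^k * ∏ i ∈ Finset.range k, Λ (α i)))) β)
          + (toMeasurable μ {α}).indicator (fun _ => ENNReal.ofReal (2*δ)) β := by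
    intro r hr α hα β hβ
    rw [Measure.restrict_apply' measurableSet_Ioo]
    by_cases hβα : β = α
    · subst hβα
      have h1 : volume ({p | |ΨS (p, β) - ΨS (p, β)| < r} ∩ Ioo (p₀ - δ) (p₀ + δ))
          ≤ ENNReal.ofReal (2*δ) := by
        refine le_trans (measure_mono Set.inter_subset_right) ?_
        rw [Real.volume_Ioo]
        apply le_of_eq
        congr 1
        ring
      refine le_trans (le_trans h1 ?_) le_add_self
      have hmem : β ∈ toMeasurable μ {β} := subset_toMeasurable _ _ rfl
      rw [Set.indicator_of_mem hmem]
    · have hex : ∃ k, α k ≠ β k := by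
        by_contra hcon
        push_neg at hcon
        exact hβα (funext fun k => (hcon k).symm)
      set k := Nat.find hex with hkdef
      have hk : α k ≠ β k := Nat.find_spec hex
      have hmin : ∀ i, i < k → α i = β i := fun i hi => not_not.mp (Nat.find_min hex hi)
      have hβcyl : β ∈ Paper.cyl (Paper.trunc α k) :=
        (mem_cyl_ofFn (fun i : Fin k => α i) β).mpr fun i => (hmin i i.isLt).symm
      set Λk : ℝ := ∏ i ∈ Finset.range k, Λ (α i) with hΛkdef
      have hΛkpos : 0 < Λk := Finset.prod_pos fun i _ => hΛpos _
      have hρkpos : (0:ℝ) < ρ ^ k := pow_pos hρpos k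
      have hrk : 0 < r / (ρ^k * Λk) := by positivity
      have hsub : {p | |ΨS (p, α) - ΨS (p, β)| < r} ∩ Ioo (p₀ - δ) (p₀ + δ) ⊆
          {p | p ∈ Ioo (-1:ℝ) 1 ∧
            |piA c b p (fun i => α (k+i)) - piA c b p (fun i => β (k+i))| < r / (ρ^k * Λk)} := by
        rintro p ⟨hpS, hpB⟩
        refine ⟨hBIoo hpB, ?_⟩
        have hdiff := piA_factor c b p α β k hγpos.le hγlt1 (hcp_bd p hpB) (hbp_bd p hpB) hmin
        have h1 : |piA c b p α - piA c b p β| < r := by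
          have h1' := hpS
          rwa [Set.mem_setOf_eq, hΨeq p hpB α hα, hΨeq p hpB β hβ] at h1'
        have hprodge : ρ^k * Λk ≤ |∏ i ∈ Finset.range k, c p (α i)| := by
          rw [Finset.abs_prod]
          calc ρ^k * Λk = ∏ i ∈ Finset.range k, (ρ * Λ (α i)) := by
                rw [Finset.prod_mul_distrib, Finset.prod_const, Finset.card_range, hΛkdef]
            _ ≤ ∏ i ∈ Finset.range k, |c p (α i)| :=
                Finset.prod_le_prod (fun i _ => (mul_pos hρpos (hΛpos _)).le)
                  (fun i _ => hBρ p hpB (α i))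
        rw [hdiff, abs_mul] at h1
        rw [lt_div_iff₀ (by positivity)]
        calc |piA c b p (fun i => α (k+i)) - piA c b p (fun i => β (k+i))| * (ρ^k * Λk)
            ≤ |piA c b p (fun i => α (k+i)) - piA c b p (fun i => β (k+i))|
                * |∏ i ∈ Finset.range k, c p (α i)| :=
              mul_le_mul_of_nonneg_left hprodge (abs_nonneg _)
          _ = |∏ i ∈ Finset.range k, c p (α i)|
                * |piA c b p (fun i => α (k+i)) - piA c b p (fun i => β (k+i))| := mul_comm _ _
          _ < r := h1
      have hk0 : (fun i => α (k+i)) 0 ≠ (fun i => β (k+i)) 0 := by simpa using hk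
      have hterm : (toMeasurable μ (Paper.cyl (Paper.trunc α k))).indicator
          (fun _ => ENNReal.ofReal (C * r / (ρ^k * Λk))) β
            = ENNReal.ofReal (C * r / (ρ^k * Λk)) :=
        Set.indicator_of_mem (subset_toMeasurable _ _ hβcyl) _
      calc volume ({p | |ΨS (p, α) - ΨS (p, β)| < r} ∩ Ioo (p₀ - δ) (p₀ + δ))
          ≤ volume {p | p ∈ Ioo (-1:ℝ) 1 ∧
              |piA c b p (fun i => α (k+i)) - piA c b p (fun i => β (k+i))| < r / (ρ^k * Λk)} :=
            measure_mono hsub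
        _ ≤ ENNReal.ofReal (C * (r / (ρ^k * Λk))) :=
            hTC (fun i => α (k+i)) (fun i => β (k+i)) hk0 _ hrk
        _ = ENNReal.ofReal (C * r / (ρ^k * Λk)) := by rw [mul_div_assoc]
        _ ≤ ∑' k' : ℕ, (toMeasurable μ (Paper.cyl (Paper.trunc α k'))).indicator
              (fun _ => ENNReal.ofReal (C * r / (ρ^k' * ∏ i ∈ Finset.range k', Λ (α i)))) β := by
            rw [← hterm]
            exact ENNReal.le_tsum k
        _ ≤ _ := le_self_add
  -- integrate the pair bound in β
  have hinner : ∀ r : ℝ, 0 < r → ∀ α ∈ G,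
      (∫⁻ β, (volume.restrict B) {p | |ΨS (p, α) - ΨS (p, β)| < r} ∂μ)
        ≤ ∑' k : ℕ, ENNReal.ofReal
            (C * r / ρ^k * (∏ i ∈ Finset.range k, Λ (α i)) ^ (Δp₀ - 1)) := by
    intro r hr α hα
    have hmk : ∀ k : ℕ, Measurable ((toMeasurable μ (Paper.cyl (Paper.trunc α k))).indicator
        (fun _ => ENNReal.ofReal (C * r / (ρ^k * ∏ i ∈ Finset.range k, Λ (α i))))
          : (ℕ → A) → ℝ≥0∞) :=
      fun k => measurable_const.indicator (measurableSet_toMeasurable _ _)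
    have h1 : (∫⁻ β, (volume.restrict B) {p | |ΨS (p, α) - ΨS (p, β)| < r} ∂μ)
        ≤ ∫⁻ β, ((∑' k : ℕ, (toMeasurable μ (Paper.cyl (Paper.trunc α k))).indicator
              (fun _ => ENNReal.ofReal (C * r / (ρ^k * ∏ i ∈ Finset.range k, Λ (α i)))) β)
            + (toMeasurable μ {α}).indicator (fun _ => ENNReal.ofReal (2*δ)) β) ∂μ :=
      lintegral_mono_ae (hGae.mono fun β hβ => hpair r hr α hα β hβ)
    refine le_trans h1 ?_
    rw [lintegral_add_left (Measurable.ennreal_tsum hmk)]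
    have hsing0 : (∫⁻ β, (toMeasurable μ {α}).indicator
        (fun _ => ENNReal.ofReal (2*δ)) β ∂μ) = 0 := by
      rw [lintegral_indicator_const (measurableSet_toMeasurable _ _),
        measure_toMeasurable, hsing α, mul_zero]
    rw [hsing0, add_zero, lintegral_tsum (fun k => (hmk k).aemeasurable)]
    apply ENNReal.tsum_le_tsum
    intro k
    rw [lintegral_indicator_const (measurableSet_toMeasurable _ _), measure_toMeasurable]
    have hcylval : μ (Paper.cyl (Paper.trunc α k))
        = ENNReal.ofReal ((∏ i ∈ Finset.range k, Λ (α i)) ^ Δp₀) := by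
      have hcv := hcylm k (fun i : Fin k => α i)
      rw [show Paper.cyl (Paper.trunc α k) = Paper.cyl (List.ofFn fun i : Fin k => α i)
        from rfl, hcv]
      congr 1
      rw [Real.finset_prod_rpow Finset.univ (fun i : Fin k => Λ (α i))
        (fun i _ => abs_nonneg _) Δp₀]
      congr 1
      exact (Finset.prod_range fun i => Λ (α i)).symm
    rw [hcylval, ← ENNReal.ofReal_mul (by positivity)]
    apply ENNReal.ofReal_le_ofReal
    apply le_of_eq
    have hΛkpos : (0:ℝ) < ∏ i ∈ Finset.range k, Λ (α i) := Finset.prod_pos fun i _ => hΛpos _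
    have hρkpos : (0:ℝ) < ρ ^ k := pow_pos hρpos k
    rw [show Δp₀ - 1 = Δp₀ - (1:ℝ) from rfl, Real.rpow_sub hΛkpos, Real.rpow_one]
    field_simp
  -- geometric constant
  set q1 : ℝ≥0∞ := ENNReal.ofReal (q0 / ρ) with hq1def
  have hq1lt1 : q1 < 1 := by
    rw [hq1def, ENNReal.ofReal_lt_one, div_lt_one hρpos]
    exact hq0ρ
  -- integrate in α
  have houter : ∀ r : ℝ, 0 < r →
      (∫⁻ α, (∑' k : ℕ, ENNReal.ofReal
          (C * r / ρ^k * (∏ i ∈ Finset.range k, Λ (α i)) ^ (Δp₀ - 1))) ∂μ)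
        ≤ ENNReal.ofReal (C * r) * ∑' k : ℕ, q1 ^ k := by
    intro r hr
    have hgk_eq : ∀ k : ℕ, (fun α : ℕ → A => ENNReal.ofReal
        (C * r / ρ^k * (∏ i ∈ Finset.range k, Λ (α i)) ^ (Δp₀-1)))
        = fun α => ∑ w : Fin k → A, (Paper.cyl (List.ofFn w)).indicator
            (fun _ => ENNReal.ofReal (C * r / ρ^k * (∏ i, Λ (w i)) ^ (Δp₀-1))) α := by
      intro k
      funext α
      rw [Finset.sum_eq_single (fun i : Fin k => α i)]
      · rw [Set.indicator_of_mem ((mem_cyl_ofFn _ α).mpr fun i => rfl)]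
        congr 2
        rw [Finset.prod_range fun i => Λ (α i)]
      · intro w _ hne
        apply Set.indicator_of_notMem
        intro hmem
        apply hne
        funext i
        exact ((mem_cyl_ofFn w α).mp hmem i).symm
      · intro hne
        exact absurd (Finset.mem_univ _) hne
    have hgkmeas : ∀ k : ℕ, AEMeasurable (fun α : ℕ → A => ENNReal.ofReal
        (C * r / ρ^k * (∏ i ∈ Finset.range k, Λ (α i)) ^ (Δp₀-1))) μ := by
      intro k
      rw [hgk_eq k]
      apply Finset.aemeasurable_fun_sum
      intro w _
      exact (aemeasurable_indicator_iff₀ (hnullcyl k w)).mpr aemeasurable_const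
    rw [lintegral_tsum hgkmeas]
    have hbk : ∀ k : ℕ, (∫⁻ α, ENNReal.ofReal
        (C * r / ρ^k * (∏ i ∈ Finset.range k, Λ (α i)) ^ (Δp₀-1)) ∂μ)
        ≤ ENNReal.ofReal (C * r) * q1 ^ k := by
      intro k
      have hint : (∫⁻ α, ENNReal.ofReal
          (C * r / ρ^k * (∏ i ∈ Finset.range k, Λ (α i)) ^ (Δp₀-1)) ∂μ)
          = ∑ w : Fin k → A, ENNReal.ofReal
              (C * r / ρ^k * (∏ i, Λ (w i)) ^ (Δp₀-1) * ∏ i, mfn (w i)) := by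
        rw [lintegral_congr (fun α => congrFun (hgk_eq k) α)]
        rw [lintegral_finset_sum' _ (fun w _ =>
          ((aemeasurable_indicator_iff₀ (hnullcyl k w)).mpr aemeasurable_const))]
        apply Finset.sum_congr rfl
        intro w _
        rw [lintegral_indicator₀ (hnullcyl k w), setLIntegral_const, hcylm k w,
          ← ENNReal.ofReal_mul (by positivity)]
      rw [hint]
      have hρkpos : (0:ℝ) < ρ ^ k := pow_pos hρpos k
      have hsum_real : ∑ w : Fin k → A,
          (C * r / ρ^k * (∏ i, Λ (w i)) ^ (Δp₀-1) * ∏ i, mfn (w i))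
          = C * r / ρ^k * (∑ a, Λ a ^ (Δp₀-1) * mfn a) ^ k := by
        rw [← sum_words (fun a => Λ a ^ (Δp₀-1) * mfn a) k, Finset.mul_sum]
        apply Finset.sum_congr rfl
        intro w _
        rw [← Real.finset_prod_rpow Finset.univ (fun i : Fin k => Λ (w i))
          (fun i _ => abs_nonneg _) (Δp₀-1), mul_assoc, ← Finset.prod_mul_distrib]
      have hsum_le : (∑ a, Λ a ^ (Δp₀-1) * mfn a) ≤ q0 := by
        have h1 : ∀ a : A, Λ a ^ (Δp₀-1) * mfn a ≤ q0 * mfn a := by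
          intro a
          apply mul_le_mul_of_nonneg_right _ (hm0 a)
          calc Λ a ^ (Δp₀-1) ≤ γ ^ (Δp₀-1) :=
                Real.rpow_le_rpow (abs_nonneg _) (hΛγ a).le (by linarith)
            _ ≤ γ ^ ε := Real.rpow_le_rpow_of_exponent_ge hγpos hγlt1.le hΔε
        calc (∑ a, Λ a ^ (Δp₀-1) * mfn a) ≤ ∑ a, q0 * mfn a :=
              Finset.sum_le_sum fun a _ => h1 a
          _ = q0 := by rw [← Finset.mul_sum, hm1, mul_one]
      have hsum_pos : (0:ℝ) ≤ ∑ a, Λ a ^ (Δp₀-1) * mfn a :=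
        Finset.sum_nonneg fun a _ => mul_nonneg (Real.rpow_nonneg (abs_nonneg _) _) (hm0 a)
      calc (∑ w : Fin k → A, ENNReal.ofReal
            (C * r / ρ^k * (∏ i, Λ (w i)) ^ (Δp₀-1) * ∏ i, mfn (w i)))
          = ENNReal.ofReal (∑ w : Fin k → A,
              (C * r / ρ^k * (∏ i, Λ (w i)) ^ (Δp₀-1) * ∏ i, mfn (w i))) := by
            rw [ENNReal.ofReal_sum_of_nonneg]
            intro w _
            positivity
        _ = ENNReal.ofReal (C * r / ρ^k * (∑ a, Λ a ^ (Δp₀-1) * mfn a) ^ k) := by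
            rw [hsum_real]
        _ ≤ ENNReal.ofReal (C * r * (q0 / ρ) ^ k) := by
            apply ENNReal.ofReal_le_ofReal
            have hS : (∑ a, Λ a ^ (Δp₀-1) * mfn a) ^ k ≤ q0 ^ k :=
              pow_le_pow_left₀ hsum_pos hsum_le k
            calc C * r / ρ^k * (∑ a, Λ a ^ (Δp₀-1) * mfn a) ^ k
                ≤ C * r / ρ^k * q0 ^ k :=
                  mul_le_mul_of_nonneg_left hS (by positivity)
              _ = C * r * (q0 / ρ) ^ k := by
                  have h1q0 : (1:ℝ) + q0 ≠ 0 := by positivity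
                  rw [hρdef]
                  ring
        _ = ENNReal.ofReal (C * r) * q1 ^ k := by
            rw [ENNReal.ofReal_mul (by positivity), hq1def,
              ENNReal.ofReal_pow (by positivity)]
    calc (∑' k : ℕ, ∫⁻ α, ENNReal.ofReal
          (C * r / ρ^k * (∏ i ∈ Finset.range k, Λ (α i)) ^ (Δp₀-1)) ∂μ)
        ≤ ∑' k : ℕ, ENNReal.ofReal (C * r) * q1 ^ k := ENNReal.tsum_le_tsum hbk
      _ = ENNReal.ofReal (C * r) * ∑' k : ℕ, q1 ^ k := ENNReal.tsum_mul_left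
  -- the geometric series is finite
  set K0 : ℝ≥0∞ := ∑' k : ℕ, q1 ^ k with hK0def
  have hK0top : K0 ≠ ⊤ := by
    rw [hK0def, ENNReal.tsum_geometric]
    exact ENNReal.inv_ne_top.mpr (tsub_pos_of_lt hq1lt1).ne'
  -- uniform bound for each n
  have hglobal : ∀ n : ℕ, (∫⁻ p in B, Jp p (u n) / ENNReal.ofReal (2 * u n))
      ≤ ENNReal.ofReal C * K0 := by
    intro n
    have hrn : (0:ℝ) < u n := hupos n
    have hofR0 : ENNReal.ofReal (2 * u n) ≠ 0 := by
      rw [← ENNReal.ofReal_zero]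
      intro hc
      have := ENNReal.ofReal_eq_ofReal_iff (by positivity) (le_refl 0) |>.mp hc
      linarith
    have hofRtop : (ENNReal.ofReal (2 * u n))⁻¹ ≠ ⊤ := ENNReal.inv_ne_top.mpr hofR0
    have h0 : (∫⁻ p in B, Jp p (u n) / ENNReal.ofReal (2 * u n))
        = (∫⁻ p in B, Jp p (u n)) / ENNReal.ofReal (2 * u n) := by
      simp only [div_eq_mul_inv]
      exact lintegral_mul_const' _ _ hofRtop
    rw [h0, hTon (u n) hrn]
    have h1 : (∫⁻ α, ∫⁻ β, (volume.restrict B) {p | |ΨS (p, α) - ΨS (p, β)| < u n} ∂μ ∂μ)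
        ≤ ENNReal.ofReal (C * u n) * K0 := by
      refine le_trans (lintegral_mono_ae (hGae.mono fun α hα => hinner (u n) hrn α hα)) ?_
      exact houter (u n) hrn
    refine le_trans (ENNReal.div_le_div_right h1 _) ?_
    set t : ℝ≥0∞ := ENNReal.ofReal (u n) with htdef
    have ht0 : t ≠ 0 := by
      rw [htdef, ← ENNReal.ofReal_zero]
      intro hc
      have := ENNReal.ofReal_eq_ofReal_iff hrn.le (le_refl 0) |>.mp hc
      linarith
    have httop : t ≠ ⊤ := ENNReal.ofReal_ne_top
    have h2 : ENNReal.ofReal (2 * u n) = 2 * t := by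
      rw [htdef, ENNReal.ofReal_mul (by norm_num : (0:ℝ) ≤ 2)]
      norm_num
    have h3 : ENNReal.ofReal (C * u n) = ENNReal.ofReal C * t := by
      rw [htdef, ENNReal.ofReal_mul hC0.le]
    rw [h2, h3]
    calc ENNReal.ofReal C * t * K0 / (2 * t)
        ≤ ENNReal.ofReal C * t * K0 / t := by
          apply ENNReal.div_le_div_left
          exact le_mul_of_one_le_left zero_le (by norm_num)
      _ = ENNReal.ofReal C * K0 := by
          rw [mul_right_comm, mul_div_assoc, ENNReal.div_self ht0 httop, mul_one]
  -- final assembly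
  calc (∫⁻ p in B, ∫⁻ x, densR (Measure.map (piA c b p) μ) x ∂(Measure.map (piA c b p) μ))
      ≤ ∫⁻ p in B, liminf (fun n : ℕ => Jp p (u n) / ENNReal.ofReal (2 * u n)) atTop :=
        lintegral_mono_ae ((ae_restrict_mem measurableSet_Ioo).mono fun p hp => hstepA p hp)
    _ ≤ liminf (fun n : ℕ => ∫⁻ p in B, Jp p (u n) / ENNReal.ofReal (2 * u n)) atTop :=
        lintegral_liminf_le fun n => (hJmeas (u n)).div_const _
    _ ≤ ENNReal.ofReal C * K0 := by
        refine le_trans (Filter.liminf_le_liminf (Filter.Eventually.of_forall hglobal)) ?_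
        rw [Filter.liminf_const]
    _ < ⊤ := ENNReal.mul_lt_top ENNReal.ofReal_lt_top (lt_top_iff_ne_top.mpr hK0top)


end IFS
end
end

section
/- Let (Ψ_p)_{p∈P} be a family of IFS of affine contractions satisfying assumption (T_aff). Let p₀ ∈ P, ε > 0, and δ > 0 be such that B := (p₀−δ, p₀+δ) ⊂ P and Λ_{p₁,a}^{1+ε/2} ≤ Λ_{p₂,a} for all p₁, p₂ ∈ B and a ∈ 𝒜 (hence Λ_{p₁,α}^{1+ε/2} ≤ Λ_{p₂,α} for all finite words α). Then there exists C' > 0 such that for every n ≥ 0, every ρ ∈ 𝒜^n, every pair (α,β) ∈ C_ρ and every r > 0: Leb₁{p ∈ B : |π_p(α) − π_p(β)| < r} ≤ C'·r·Λ_{p₀,ρ}^{−1−ε/2}. -/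
open Filter MeasureTheory Set
open scoped Topology ENNReal NNReal

noncomputable section

/-! If `α` and `β` both begin with the word `ρ`, then `π_p α = ψ_p^ρ (π_p σ^{|ρ|} α)` and likewise
for `β`, and `ψ_p^ρ` is affine with ratio `Λ_{p,ρ}`; hence
`|π_p α - π_p β| = Λ_{p,ρ} |π_p σ^{|ρ|} α - π_p σ^{|ρ|} β|`. On `B` the distortion bound gives
`Λ_{p,ρ} ≥ Λ_{p₀,ρ}^{1+ε/2}`, so the set of `p ∈ B` where `α, β` are `r`-close lies in the set where
the shifted pair, whose first letters differ, is `r Λ_{p₀,ρ}^{-1-ε/2}`-close, and (T_aff)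
bounds the measure of the latter. -/

namespace Paper

variable {A : Type}

lemma trunc_succ (α : ℕ → A) (n : ℕ) : trunc α (n + 1) = trunc α n ++ [α n] := by
  simp only [trunc, List.ofFn_succ', List.concat_eq_append, Fin.val_castSucc, Fin.val_last]

lemma trunc_add_of_prefix {α : ℕ → A} {w : List A} (hw : ∀ i : Fin w.length, α i = w.get i)
    (k : ℕ) : trunc α (w.length + k) = w ++ trunc (fun j => α (w.length + j)) k := by
  induction k with
  | zero =>
    simp only [Nat.add_zero, trunc, List.ofFn_zero, List.append_nil]
    exact List.ext_get (by simp) fun i _ hi => by simpa using hw ⟨i, hi⟩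
  | succ k ih => rw [← Nat.add_assoc, trunc_succ, ih, trunc_succ, List.append_assoc]

end Paper

namespace IFS

open Paper

variable {A : Type} (c b : ℝ → A → ℝ)

lemma psiA_append (p : ℝ) (w₁ w₂ : List A) (x : ℝ) :
    psiA c b p (w₁ ++ w₂) x = psiA c b p w₁ (psiA c b p w₂ x) := by
  induction w₁ with
  | nil => rfl
  | cons a w ih => simp only [List.cons_append, psiA, ih]

lemma continuous_psiA (p : ℝ) (w : List A) : Continuous (psiA c b p w) := by
  induction w with
  | nil => exact continuous_id
  | cons a w ih => exact (continuous_const.mul ih).add continuous_const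

lemma abs_psiA_sub_psiA (p : ℝ) (w : List A) (x y : ℝ) :
    |psiA c b p w x - psiA c b p w y| = LamA c p w * |x - y| := by
  induction w with
  | nil => simp [psiA, LamA]
  | cons a w ih =>
    rw [psiA, psiA, add_sub_add_right_eq_sub, ← mul_sub, abs_mul, ih]
    simp only [LamA, List.map_cons, List.prod_cons, mul_assoc]

lemma LamA_nonneg (p : ℝ) (w : List A) : 0 ≤ LamA c p w :=
  List.prod_nonneg fun _ hx => by
    obtain ⟨a, -, rfl⟩ := List.mem_map.1 hx
    exact abs_nonneg _

variable {c b}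

lemma LamA_pos {p : ℝ} (hc : ∀ a, c p a ≠ 0) (w : List A) : 0 < LamA c p w :=
  List.prod_pos fun _ hx => by
    obtain ⟨a, -, rfl⟩ := List.mem_map.1 hx
    exact abs_pos.2 (hc a)

lemma LamA_le_pow {p γ : ℝ} (hc : ∀ a, |c p a| ≤ γ) (w : List A) :
    LamA c p w ≤ γ ^ w.length := by
  induction w with
  | nil => simp [LamA]
  | cons a w ih =>
    have hL : LamA c p (a :: w) = |c p a| * LamA c p w := List.prod_cons
    rw [hL, List.length_cons, pow_succ']
    exact mul_le_mul (hc a) ih (LamA_nonneg c p w) ((abs_nonneg _).trans (hc a))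

lemma LamA_rpow_le {p₀ p s : ℝ} (hc : ∀ a, |c p₀ a| ^ s ≤ |c p a|) (w : List A) :
    LamA c p₀ w ^ s ≤ LamA c p w := by
  induction w with
  | nil => simp [LamA]
  | cons a w ih =>
    have hL : ∀ q, LamA c q (a :: w) = |c q a| * LamA c q w := fun _ => List.prod_cons
    rw [hL, hL, Real.mul_rpow (abs_nonneg _) (LamA_nonneg c p₀ w)]
    exact mul_le_mul (hc a) ih (Real.rpow_nonneg (LamA_nonneg c p₀ w) s) (abs_nonneg _)

lemma IFSHyp.abs_le_one {U : Set ℝ} (h : IFSHyp c b U) {p : ℝ} (hp : p ∈ U) (a : A) :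
    |b p a| ≤ 1 := by
  have h0 := h.2.2.2.2 p hp a 0 (by norm_num)
  rw [mul_zero, zero_add] at h0
  exact abs_le.2 ⟨h0.1.le, h0.2.le⟩

lemma GammaBoundsA.abs_le {γ' γ : ℝ} (hγ : GammaBoundsA c γ' γ) {p : ℝ}
    (hp : p ∈ Icc (-1:ℝ) 1) (a : A) : |c p a| ≤ γ :=
  (hγ.2.2.2 p hp a).2.le

lemma GammaBoundsA.ne_zero {γ' γ : ℝ} (hγ : GammaBoundsA c γ' γ) {p : ℝ}
    (hp : p ∈ Icc (-1:ℝ) 1) (a : A) : c p a ≠ 0 :=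
  abs_pos.1 (hγ.1.trans (hγ.2.2.2 p hp a).1)

lemma tendsto_psiA_trunc_piA {p γ M : ℝ} (hγ : γ < 1) (hc : ∀ a, |c p a| ≤ γ)
    (hb : ∀ a, |b p a| ≤ M) (α : ℕ → A) :
    Tendsto (fun n => psiA c b p (trunc α n) 0) atTop (𝓝 (piA c b p α)) := by
  have hcauchy : CauchySeq fun n => psiA c b p (trunc α n) 0 := by
    refine cauchySeq_of_le_geometric γ M hγ fun n => ?_
    have hlen : (trunc α n).length = n := List.length_ofFn
    rw [Real.dist_eq, trunc_succ, psiA_append, abs_psiA_sub_psiA, mul_comm M]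
    have hstep : |0 - psiA c b p [α n] 0| ≤ M := by simpa [psiA] using hb (α n)
    calc LamA c p (trunc α n) * |0 - psiA c b p [α n] 0|
        ≤ LamA c p (trunc α n) * M := mul_le_mul_of_nonneg_left hstep (LamA_nonneg c p _)
      _ ≤ γ ^ n * M := by
          gcongr
          · exact (abs_nonneg _).trans hstep
          · simpa [hlen] using LamA_le_pow hc (trunc α n)
  obtain ⟨L, hL⟩ := cauchySeq_tendsto_of_complete hcauchy
  rwa [piA, hL.limUnder_eq]

lemma piA_eq_psiA_piA_shift {p γ M : ℝ} (hγ : γ < 1) (hc : ∀ a, |c p a| ≤ γ)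
    (hb : ∀ a, |b p a| ≤ M) {α : ℕ → A} {w : List A} (hw : ∀ i : Fin w.length, α i = w.get i) :
    piA c b p α = psiA c b p w (piA c b p fun j => α (w.length + j)) := by
  have hshift : Tendsto (fun k => psiA c b p (trunc α (w.length + k)) 0) atTop
      (𝓝 (piA c b p α)) :=
    (tendsto_psiA_trunc_piA hγ hc hb α).comp
      (tendsto_atTop_mono (Nat.le_add_left · w.length) tendsto_id)
  refine tendsto_nhds_unique hshift ?_
  simp_rw [trunc_add_of_prefix hw, psiA_append]
  exact ((continuous_psiA c b p w).tendsto _).comp (tendsto_psiA_trunc_piA hγ hc hb _)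

lemma abs_piA_sub_piA_of_common_prefix {p γ M : ℝ} (hγ : γ < 1) (hc : ∀ a, |c p a| ≤ γ)
    (hb : ∀ a, |b p a| ≤ M) {α β : ℕ → A} {w : List A}
    (hα : ∀ i : Fin w.length, α i = w.get i) (hβ : ∀ i : Fin w.length, β i = w.get i) :
    |piA c b p α - piA c b p β| =
      LamA c p w *
        |piA c b p (fun j => α (w.length + j)) - piA c b p fun j => β (w.length + j)| := by
  rw [piA_eq_psiA_piA_shift hγ hc hb hα, piA_eq_psiA_piA_shift hγ hc hb hβ,
    abs_psiA_sub_psiA]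

theorem lemma_borne_general {A : Type}
    (c b : ℝ → A → ℝ) (U : Set ℝ) (h : IFSHyp c b U)
    (γ' γ : ℝ) (hγ : GammaBoundsA c γ' γ)
    (hT : TransAff c b)
    (p₀ : ℝ) (ε : ℝ)
    (δ : ℝ) (hδ : 0 < δ)
    (hB : Ioo (p₀ - δ) (p₀ + δ) ⊆ Ioo (-1:ℝ) 1)
    (hdistort : ∀ p₁ ∈ Ioo (p₀ - δ) (p₀ + δ), ∀ p₂ ∈ Ioo (p₀ - δ) (p₀ + δ), ∀ a : A,
      |c p₁ a| ^ (1 + ε / 2) ≤ |c p₂ a|) :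
    ∃ C' > (0:ℝ), ∀ (w : List A) (α β : ℕ → A),
      (∀ i : Fin w.length, α i = w.get i) → (∀ i : Fin w.length, β i = w.get i) →
      α w.length ≠ β w.length → ∀ rr > (0:ℝ),
      volume {p ∈ Ioo (p₀ - δ) (p₀ + δ) | |piA c b p α - piA c b p β| < rr}
        ≤ ENNReal.ofReal (C' * rr * LamA c p₀ w ^ (-(1:ℝ) - ε / 2)) := by
  obtain ⟨C, hC, hTC⟩ := hT
  refine ⟨C, hC, fun w α β hα hβ hne r hr => ?_⟩
  have hp₀ : p₀ ∈ Ioo (p₀ - δ) (p₀ + δ) := ⟨by linarith, by linarith⟩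
  have hΛ₀ : 0 < LamA c p₀ w :=
    LamA_pos (hγ.ne_zero (Ioo_subset_Icc_self (hB hp₀))) w
  have hrpow : LamA c p₀ w ^ (-(1:ℝ) - ε / 2) = (LamA c p₀ w ^ (1 + ε / 2))⁻¹ := by
    rw [← Real.rpow_neg hΛ₀.le, neg_add']
  have hsub : {p ∈ Ioo (p₀ - δ) (p₀ + δ) | |piA c b p α - piA c b p β| < r} ⊆
      {p ∈ Ioo (-1:ℝ) 1 | |piA c b p (fun j => α (w.length + j)) -
        piA c b p (fun j => β (w.length + j))| < r * LamA c p₀ w ^ (-(1:ℝ) - ε / 2)} := by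
    rintro p ⟨hpB, hp⟩
    have hpI := hB hpB
    rw [abs_piA_sub_piA_of_common_prefix hγ.2.2.1 (hγ.abs_le (Ioo_subset_Icc_self hpI))
      (h.abs_le_one (h.2.1 (Ioo_subset_Icc_self hpI))) hα hβ] at hp
    have hΛ : LamA c p₀ w ^ (1 + ε / 2) ≤ LamA c p w :=
      LamA_rpow_le (hdistort p₀ hp₀ p hpB) w
    refine ⟨hpI, ?_⟩
    rw [hrpow, ← div_eq_mul_inv, lt_div_iff₀ (Real.rpow_pos_of_pos hΛ₀ _), mul_comm]
    exact (mul_le_mul_of_nonneg_right hΛ (abs_nonneg _)).trans_lt hp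
  calc volume {p ∈ Ioo (p₀ - δ) (p₀ + δ) | |piA c b p α - piA c b p β| < r}
      ≤ ENNReal.ofReal (C * (r * LamA c p₀ w ^ (-(1:ℝ) - ε / 2))) :=
        (measure_mono hsub).trans (hTC _ _ hne _ (mul_pos hr (Real.rpow_pos_of_pos hΛ₀ _)))
    _ = ENNReal.ofReal (C * r * LamA c p₀ w ^ (-(1:ℝ) - ε / 2)) := by rw [mul_assoc]

/-- Lemma: localized transversality bound for pairs with common prefix ρ. -/
theorem lemma_borne {A : Type} [Fintype A] (hA : 2 ≤ Fintype.card A)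
    (c b : ℝ → A → ℝ) (U : Set ℝ) (h : IFSHyp c b U)
    (γ' γ : ℝ) (hγ : GammaBoundsA c γ' γ)
    (hT : TransAff c b)
    (p₀ : ℝ) (hp₀ : p₀ ∈ Ioo (-1:ℝ) 1) (ε : ℝ) (hε : 0 < ε)
    (δ : ℝ) (hδ : 0 < δ)
    (hB : Ioo (p₀ - δ) (p₀ + δ) ⊆ Ioo (-1:ℝ) 1)
    (hdistort : ∀ p₁ ∈ Ioo (p₀ - δ) (p₀ + δ), ∀ p₂ ∈ Ioo (p₀ - δ) (p₀ + δ), ∀ a : A,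
      |c p₁ a| ^ (1 + ε / 2) ≤ |c p₂ a|) :
    ∃ C' > (0:ℝ), ∀ (w : List A) (α β : ℕ → A),
      (∀ i : Fin w.length, α i = w.get i) → (∀ i : Fin w.length, β i = w.get i) →
      α w.length ≠ β w.length → ∀ rr > (0:ℝ),
      volume {p ∈ Ioo (p₀ - δ) (p₀ + δ) | |piA c b p α - piA c b p β| < rr}
        ≤ ENNReal.ofReal (C' * rr * LamA c p₀ w ^ (-(1:ℝ) - ε / 2)) :=
  lemma_borne_general c b U h γ' γ hγ hT p₀ ε δ hδ hB hdistort

end IFS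
end
end
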